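/- arXiv:1602.00356 — 2 statements merged into one kernel-verified Lean document; each statement's English description precedes it below -/
import Mathlib

section
/- Let G be a connected multigraph formed from connected graphs H and H' by identifying a single vertex of H with a single vertex of H' (and no other overlap). Then Ψ_G = Ψ_H · Ψ_{H'}. -/
/-- A multigraph: each edge `e` has endpoints `fst e` and `snd e`. -/
structure Multigraph (V : Type) (E : Type) where
  fst : E → V
  snd : E → V

namespace Multigraph

variable {V E V' E' W : Type}

/-- Adjacency using only edges in the set `S`. -/
def Adj (G : Multigraph V E) (S : Set E) (u v : V) : Prop :=
  ∃ e ∈ S, (G.fst e = u ∧ G.snd e = v) ∨ (G.fst e = v ∧ G.snd e = u)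

/-- All vertices are connected using edges from `S`. -/
def ConnOn (G : Multigraph V E) (S : Set E) : Prop :=
  ∀ u v : V, Relation.ReflTransGen (G.Adj S) u v

/-- The multigraph is connected. -/
def ConnectedGraph (G : Multigraph V E) : Prop := G.ConnOn Set.univ

/-- A spanning tree: a minimally spanning-connected edge set. -/
def IsSpanningTree (G : Multigraph V E) [DecidableEq E] (T : Finset E) : Prop :=
  G.ConnOn ↑T ∧ ∀ e ∈ T, ¬ G.ConnOn ↑(T.erase e)

open Classical in
/-- The Kirchhoff polynomial `Ψ_G = ∑_{T spanning tree} ∏_{e ∉ T} t_e`. -/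
noncomputable def kirchhoff (G : Multigraph V E) [Fintype E] [DecidableEq E] :
    MvPolynomial E ℚ :=
  ∑ T : Finset E, if G.IsSpanningTree T then ∏ e ∈ Tᶜ, MvPolynomial.X e else 0

/-- Deletion of the edge `e`. -/
def delete (G : Multigraph V E) (e : E) : Multigraph V {e' : E // e' ≠ e} :=
  ⟨fun e' => G.fst e'.1, fun e' => G.snd e'.1⟩

/-- Contraction of the edge `e` (its two endpoints get identified). -/
def contract (G : Multigraph V E) (e : E) :
    Multigraph (Quot fun a b : V => a = G.fst e ∧ b = G.snd e) {e' : E // e' ≠ e} :=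
  ⟨fun e' => Quot.mk _ (G.fst e'.1), fun e' => Quot.mk _ (G.snd e'.1)⟩

/-- Identify the two vertices `a` and `b`. -/
def identify (G : Multigraph V E) (a b : V) :
    Multigraph (Quot fun x y : V => x = a ∧ y = b) E :=
  ⟨fun e => Quot.mk _ (G.fst e), fun e => Quot.mk _ (G.snd e)⟩

/-- A self-loop. -/
def IsLoop (G : Multigraph V E) (e : E) : Prop := G.fst e = G.snd e

/-- A bridge: deleting `e` disconnects the graph. -/
def IsBridge (G : Multigraph V E) (e : E) : Prop := ¬ G.ConnOn {e' | e' ≠ e}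

/-- The whole graph is a tree (its full edge set is a spanning tree). -/
def IsTreeGraph (G : Multigraph V E) [Fintype E] [DecidableEq E] : Prop := G.IsSpanningTree Finset.univ

/-- A regular edge: not a bridge, not a self-loop, and deleting it does not leave a tree. -/
def IsRegular (G : Multigraph V E) [Fintype E] [DecidableEq E] (e : E) : Prop :=
  ¬ G.IsBridge e ∧ ¬ G.IsLoop e ∧ ¬ (G.delete e).IsTreeGraph

/-- The Jacobian ideal of a polynomial: the ideal generated by its partial derivatives. -/
noncomputable def jacobianIdeal {σ : Type} (f : MvPolynomial σ ℚ) :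
    Ideal (MvPolynomial σ ℚ) :=
  Ideal.span (Set.range fun i : σ => MvPolynomial.pderiv i f)

/-- Aluffi's Condition 1 for the pair `(G, e)`: `Ψ_G` lies in the Jacobian ideal of `Ψ_{G∖e}`. -/
def Cond1 (G : Multigraph V E) [Fintype E] [DecidableEq E] (e : E) : Prop :=
  G.kirchhoff ∈
    jacobianIdeal (MvPolynomial.rename (Subtype.val : {e' : E // e' ≠ e} → E)
      (G.delete e).kirchhoff)

end Multigraph

/-!
Retracting `G` onto `H` by collapsing `H'` to the cut vertex (and symmetrically) shows that a set
of edges connects `G` iff its `H`-part connects `H` and its `H'`-part connects `H'`; conversely both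
parts reach the cut vertex. Hence the spanning trees of `G` are exactly the disjoint unions of
spanning trees of `H` and `H'`, and the sum defining `Ψ_G` factors.
-/

theorem Function.extend_apply_of_range_inter {V V' W : Type*} {φ : V → W} {φ' : V' → W} {v₀ : V}
    (hφ : φ.Injective) (hmeet : Set.range φ ∩ Set.range φ' = {φ v₀}) (v' : V') :
    Function.extend φ id (fun _ => v₀) (φ' v') = v₀ := by
  by_cases h : ∃ v, φ v = φ' v'
  · have : φ' v' ∈ Set.range φ ∩ Set.range φ' := ⟨h, Set.mem_range_self v'⟩
    rw [hmeet, Set.mem_singleton_iff] at this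
    rw [this, hφ.extend_apply, id]
  · exact Function.extend_apply' _ _ _ h

namespace Multigraph

variable {V E V' E' W F : Type}

instance (G : Multigraph V E) (S : Set E) : Std.Symm (G.Adj S) where
  symm _ _ := fun ⟨e, he, h⟩ => ⟨e, he, h.symm⟩

theorem connOn_of_forall_reflTransGen {G : Multigraph V E} {S : Set E} (v0 : V)
    (h : ∀ v, Relation.ReflTransGen (G.Adj S) v v0) : G.ConnOn S :=
  fun u v => (h u).trans (Std.Symm.symm _ _ (h v))

theorem reflTransGen_adj_map {G : Multigraph V E} {H : Multigraph W F} {S : Set E} {S₀ : Set F}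
    (p : V → W)
    (hp : ∀ e ∈ S, (∃ f ∈ S₀, H.fst f = p (G.fst e) ∧ H.snd f = p (G.snd e)) ∨
      p (G.fst e) = p (G.snd e))
    {u v : V} (huv : Relation.ReflTransGen (G.Adj S) u v) :
    Relation.ReflTransGen (H.Adj S₀) (p u) (p v) := by
  refine Relation.ReflTransGen.lift' p (fun a b ⟨e, he, hab⟩ => ?_) _ _ huv
  rcases hp e he with ⟨f, hf, h1, h2⟩ | hcontr
  · rcases hab with ⟨rfl, rfl⟩ | ⟨rfl, rfl⟩
    · exact .single ⟨f, hf, .inl ⟨h1, h2⟩⟩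
    · exact .single ⟨f, hf, .inr ⟨h1, h2⟩⟩
  · rcases hab with ⟨rfl, rfl⟩ | ⟨rfl, rfl⟩ <;> rw [Function.onFun, hcontr]

theorem ConnOn.of_surjective {G : Multigraph V E} {H : Multigraph W F} {S : Set E} {S₀ : Set F}
    {p : V → W} (hG : G.ConnOn S) (hsurj : p.Surjective)
    (hp : ∀ e ∈ S, (∃ f ∈ S₀, H.fst f = p (G.fst e) ∧ H.snd f = p (G.snd e)) ∨
      p (G.fst e) = p (G.snd e)) :
    H.ConnOn S₀ := by
  intro u v
  obtain ⟨u, rfl⟩ := hsurj u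
  obtain ⟨v, rfl⟩ := hsurj v
  exact reflTransGen_adj_map p hp (hG u v)

theorem connOn_iff_of_join
    {H : Multigraph V E} {H' : Multigraph V' E'} {G : Multigraph W (E ⊕ E')}
    {φ : V → W} {φ' : V' → W} {w0 : W}
    (hφ : φ.Injective) (hφ' : φ'.Injective)
    (hc : ∀ e : E, G.fst (Sum.inl e) = φ (H.fst e) ∧ G.snd (Sum.inl e) = φ (H.snd e))
    (hc' : ∀ e' : E', G.fst (Sum.inr e') = φ' (H'.fst e') ∧
      G.snd (Sum.inr e') = φ' (H'.snd e'))
    (hcover : Set.range φ ∪ Set.range φ' = Set.univ)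
    (hmeet : Set.range φ ∩ Set.range φ' = {w0}) (S : Set (E ⊕ E')) :
    G.ConnOn S ↔ H.ConnOn (Sum.inl ⁻¹' S) ∧ H'.ConnOn (Sum.inr ⁻¹' S) := by
  obtain ⟨⟨v₀, rfl⟩, ⟨v₀', hv₀'⟩⟩ : w0 ∈ Set.range φ ∩ Set.range φ' := hmeet ▸ rfl
  have hmeet' : Set.range φ' ∩ Set.range φ = {φ' v₀'} := by rw [Set.inter_comm, hmeet, hv₀']
  constructor
  · intro hG
    -- retract `G` onto each side, collapsing the other side to the cut vertex
    refine ⟨hG.of_surjective (p := Function.extend φ id fun _ => v₀)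
        (fun v => ⟨φ v, hφ.extend_apply _ _ v⟩) ?_,
      hG.of_surjective (p := Function.extend φ' id fun _ => v₀')
        (fun v => ⟨φ' v, hφ'.extend_apply _ _ v⟩) ?_⟩
    · rintro (e | e') he
      · exact .inl ⟨e, he, by rw [(hc e).1, hφ.extend_apply, id],
          by rw [(hc e).2, hφ.extend_apply, id]⟩
      · right
        rw [(hc' e').1, (hc' e').2, Function.extend_apply_of_range_inter hφ hmeet,
          Function.extend_apply_of_range_inter hφ hmeet]
    · rintro (e | e') he
      · right
        rw [(hc e).1, (hc e).2, Function.extend_apply_of_range_inter hφ' hmeet',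
          Function.extend_apply_of_range_inter hφ' hmeet']
      · exact .inl ⟨e', he, by rw [(hc' e').1, hφ'.extend_apply, id],
          by rw [(hc' e').2, hφ'.extend_apply, id]⟩
  · rintro ⟨hH, hH'⟩
    refine connOn_of_forall_reflTransGen (φ v₀) fun w => ?_
    obtain ⟨v, rfl⟩ | ⟨v', rfl⟩ : w ∈ Set.range φ ∪ Set.range φ' := hcover ▸ Set.mem_univ w
    · exact reflTransGen_adj_map φ (fun e he => .inl ⟨.inl e, he, hc e⟩) (hH v v₀)
    · rw [← hv₀']
      exact reflTransGen_adj_map φ' (fun e he => .inl ⟨.inr e, he, hc' e⟩) (hH' v' v₀')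

theorem isSpanningTree_disjSum_iff [DecidableEq E] [DecidableEq E']
    {H : Multigraph V E} {H' : Multigraph V' E'} {G : Multigraph W (E ⊕ E')}
    (hconn : ∀ S : Set (E ⊕ E'),
      G.ConnOn S ↔ H.ConnOn (Sum.inl ⁻¹' S) ∧ H'.ConnOn (Sum.inr ⁻¹' S))
    (A : Finset E) (B : Finset E') :
    G.IsSpanningTree (A.disjSum B) ↔ H.IsSpanningTree A ∧ H'.IsSpanningTree B := by
  have hconn' (A : Finset E) (B : Finset E') :
      G.ConnOn ↑(A.disjSum B) ↔ H.ConnOn ↑A ∧ H'.ConnOn ↑B := by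
    convert hconn ↑(A.disjSum B) using 3 <;> ext <;> simp
  have erase_inl (e : E) : (A.disjSum B).erase (.inl e) = (A.erase e).disjSum B := by
    ext (x | x) <;> simp
  have erase_inr (e : E') : (A.disjSum B).erase (.inr e) = A.disjSum (B.erase e) := by
    ext (x | x) <;> simp
  simp only [IsSpanningTree, Sum.forall, Finset.inl_mem_disjSum, Finset.inr_mem_disjSum,
    erase_inl, erase_inr, hconn']
  tauto

open MvPolynomial in
theorem kirchhoff_eq_rename_mul_rename [Fintype E] [DecidableEq E] [Fintype E'] [DecidableEq E']
    {H : Multigraph V E} {H' : Multigraph V' E'} {G : Multigraph W (E ⊕ E')}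
    (htree : ∀ A B, G.IsSpanningTree (A.disjSum B) ↔ H.IsSpanningTree A ∧ H'.IsSpanningTree B) :
    G.kirchhoff = rename Sum.inl H.kirchhoff * rename Sum.inr H'.kirchhoff := by
  classical
  rw [kirchhoff, kirchhoff, kirchhoff, map_sum, map_sum, Finset.sum_mul_sum,
    ← Fintype.sum_prod_type', ← Finset.sumEquiv.symm.toEquiv.sum_comp]
  refine Fintype.sum_congr _ _ fun ⟨A, B⟩ => ?_
  have hcompl : (A.disjSum B)ᶜ = Aᶜ.disjSum Bᶜ := by ext (x | x) <;> simp
  simp only [OrderIso.coe_toEquiv, Finset.sumEquiv_symm_apply, htree, apply_ite (rename _),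
    map_zero, map_prod, rename_X, ite_zero_mul_ite_zero, hcompl, Finset.prod_disjSum]

end Multigraph

open Multigraph MvPolynomial in
theorem kirchhoff_one_vertex_join_general {V E V' E' W : Type}
    [Fintype E] [DecidableEq E] [Fintype E'] [DecidableEq E']
    (H : Multigraph V E) (H' : Multigraph V' E') (G : Multigraph W (E ⊕ E'))
    (φ : V → W) (φ' : V' → W) (w0 : W)
    (hφ : Function.Injective φ) (hφ' : Function.Injective φ')
    (hc : ∀ e : E, G.fst (Sum.inl e) = φ (H.fst e) ∧ G.snd (Sum.inl e) = φ (H.snd e))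
    (hc' : ∀ e' : E', G.fst (Sum.inr e') = φ' (H'.fst e') ∧
      G.snd (Sum.inr e') = φ' (H'.snd e'))
    (hcover : Set.range φ ∪ Set.range φ' = Set.univ)
    (hmeet : Set.range φ ∩ Set.range φ' = {w0}) :
    G.kirchhoff =
      rename (Sum.inl : E → E ⊕ E') H.kirchhoff *
        rename (Sum.inr : E' → E ⊕ E') H'.kirchhoff :=
  kirchhoff_eq_rename_mul_rename <| isSpanningTree_disjSum_iff <|
    connOn_iff_of_join hφ hφ' hc hc' hcover hmeet

open Multigraph MvPolynomial in
/-- One-vertex join: if the connected graph `G` is formed from connected graphs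
`H` and `H'` by identifying a single vertex (the images of `φ` and `φ'` cover
`G` and overlap in exactly one vertex `w0`), then `Ψ_G = Ψ_H · Ψ_{H'}`. -/
theorem kirchhoff_one_vertex_join {V E V' E' W : Type}
    [Fintype E] [DecidableEq E] [Fintype E'] [DecidableEq E']
    (H : Multigraph V E) (H' : Multigraph V' E') (G : Multigraph W (E ⊕ E'))
    (φ : V → W) (φ' : V' → W) (w0 : W)
    (hφ : Function.Injective φ) (hφ' : Function.Injective φ')
    (hc : ∀ e : E, G.fst (Sum.inl e) = φ (H.fst e) ∧ G.snd (Sum.inl e) = φ (H.snd e))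
    (hc' : ∀ e' : E', G.fst (Sum.inr e') = φ' (H'.fst e') ∧
      G.snd (Sum.inr e') = φ' (H'.snd e'))
    (hcover : Set.range φ ∪ Set.range φ' = Set.univ)
    (hmeet : Set.range φ ∩ Set.range φ' = {w0})
    (hG : G.ConnectedGraph) (hH : H.ConnectedGraph) (hH' : H'.ConnectedGraph) :
    G.kirchhoff =
      rename (Sum.inl : E → E ⊕ E') H.kirchhoff *
        rename (Sum.inr : E' → E ⊕ E') H'.kirchhoff :=
  kirchhoff_one_vertex_join_general H H' G φ φ' w0 hφ hφ' hc hc' hcover hmeet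
end

section
/- Let G be formed from graphs H and H' by identifying two vertices: a vertex pair {1,2} of H is identified with a vertex pair of H'. Then Ψ_G = Ψ_{H̄}·Ψ_{H'} + Ψ_H·Ψ_{H̄'}, where H̄ denotes H with vertices 1 and 2 identified. -/
/-!
A set `T = A ⊔ B` of edges of `G`, with `A ⊆ E(H)` and `B ⊆ E(H')`, is a spanning tree of `G`
iff either `A` is a spanning tree of `H̄` and `B` one of `H'`, or `A` is one of `H` and `B` one
of `H̄'`. Indeed, a walk of `G` between vertices of `H` either stays in `H` or crosses over to
`H'` through the glued pair, so `T` is connected iff `A` and `B` are connected modulo the glued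
pair and one of them joins the pair; it is then acyclic iff the side joining the pair is a
spanning tree and the other side is a spanning tree after identifying the pair. The two cases
are exclusive, because a spanning tree of `H` joins `v1` to `v2` and so contains a cycle of
`H̄`. Summing `∏_{e ∉ A ⊔ B} t_e = ∏_{e ∉ A} t_e · ∏_{e ∉ B} t_e` over both cases gives the
formula.
-/

theorem Finset.compl_disjSum {E E' : Type} [Fintype E] [DecidableEq E] [Fintype E'] [DecidableEq E']
    (A : Finset E) (B : Finset E') : (A.disjSum B)ᶜ = Aᶜ.disjSum Bᶜ := by
  ext (a | b) <;> simp

namespace Multigraph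

section Reach

variable {V U E F : Type} {X : Multigraph V E} {S S' : Set E} {p q x y : V}

abbrev Reach (X : Multigraph V E) (S : Set E) : V → V → Prop :=
  Relation.ReflTransGen (X.Adj S)

theorem Adj.symm (h : X.Adj S x y) : X.Adj S y x := by
  obtain ⟨e, he, h | h⟩ := h
  exacts [⟨e, he, .inr h⟩, ⟨e, he, .inl h⟩]

theorem Reach.symm (h : X.Reach S x y) : X.Reach S y x := by
  induction h with
  | refl => exact .refl
  | tail _ hab ih => exact .head hab.symm ih

theorem Reach.mono (hS : S ⊆ S') (h : X.Reach S x y) : X.Reach S' x y :=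
  Relation.ReflTransGen.mono (fun _ _ ⟨e, he, hxy⟩ => ⟨e, hS he, hxy⟩) _ _ h

theorem reach_of_mem (X : Multigraph V E) {e : E} (he : e ∈ S) :
    X.Reach S (X.fst e) (X.snd e) :=
  .single ⟨e, he, .inl ⟨rfl, rfl⟩⟩

theorem Reach.map {Y : Multigraph U F} {T : Set F} (f : V → U)
    (hf : ∀ e ∈ S, Y.Reach T (f (X.fst e)) (f (X.snd e))) (h : X.Reach S x y) :
    Y.Reach T (f x) (f y) :=
  h.lift' f fun _ _ ⟨e, he, hab⟩ => by
    rcases hab with ⟨rfl, rfl⟩ | ⟨rfl, rfl⟩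
    exacts [hf e he, (hf e he).symm]

theorem Reach.diff_singleton {e : E} (he : X.Reach (S \ {e}) (X.fst e) (X.snd e))
    (h : X.Reach S x y) : X.Reach (S \ {e}) x y :=
  h.map id fun f hf => by
    by_cases hfe : f = e
    exacts [hfe ▸ he, X.reach_of_mem ⟨hf, hfe⟩]

theorem isSpanningTree_iff [DecidableEq E] (X : Multigraph V E) (T : Finset E) :
    X.IsSpanningTree T ↔
      X.ConnOn ↑T ∧ ∀ e ∈ T, ¬ X.Reach ↑(T.erase e) (X.fst e) (X.snd e) := by
  refine and_congr_right fun hT => forall₂_congr fun e _ => not_congr ⟨fun h => h _ _, ?_⟩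
  rw [Finset.coe_erase]
  exact fun he u v => Reach.diff_singleton he (hT u v)

theorem identify_mk_eq (p q : V) :
    (Quot.mk _ p : Quot fun x y : V => x = p ∧ y = q) = Quot.mk _ q :=
  Quot.sound ⟨rfl, rfl⟩

theorem Reach.identify (h : X.Reach S x y) :
    (X.identify p q).Reach S (Quot.mk _ x) (Quot.mk _ y) :=
  h.map _ fun _ he => (X.identify p q).reach_of_mem he

theorem reach_identify_mk_iff :
    (X.identify p q).Reach S (Quot.mk _ x) (Quot.mk _ y) ↔
      X.Reach S x y ∨ (X.Reach S x p ∧ X.Reach S q y) ∨ (X.Reach S x q ∧ X.Reach S p y) := by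
  constructor
  · set R : V → Prop := fun y =>
      X.Reach S x y ∨ (X.Reach S x p ∧ X.Reach S q y) ∨ (X.Reach S x q ∧ X.Reach S p y)
    have hpq : R p ↔ R q := by
      constructor <;> rintro (h | ⟨h, h'⟩ | ⟨h, h'⟩)
      exacts [.inr (.inl ⟨h, .refl⟩), .inl (h.trans h'.symm), .inl h,
        .inr (.inr ⟨h, .refl⟩), .inl h, .inl (h.trans h'.symm)]
    have hstep : ∀ a b, X.Adj S a b → R a → R b := by
      rintro a b hab (h | ⟨h, h'⟩ | ⟨h, h'⟩)
      exacts [.inl (h.tail hab), .inr (.inl ⟨h, h'.tail hab⟩), .inr (.inr ⟨h, h'.tail hab⟩)]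
    -- `R` is invariant under `p ↔ q`, so it descends to the vertices of the identified graph
    let R' : Quot (fun a b : V => a = p ∧ b = q) → Prop :=
      Quot.lift R fun a b ⟨ha, hb⟩ => ha ▸ hb ▸ propext hpq
    suffices ∀ c, (X.identify p q).Reach S (Quot.mk _ x) c → R' c from this _
    intro c hc
    induction hc with
    | refl => exact .inl .refl
    | tail _ hbc ih =>
      obtain ⟨e, he, ⟨rfl, rfl⟩ | ⟨rfl, rfl⟩⟩ := hbc
      exacts [hstep _ _ ⟨e, he, .inl ⟨rfl, rfl⟩⟩ ih, hstep _ _ ⟨e, he, .inr ⟨rfl, rfl⟩⟩ ih]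
  · have hpq := identify_mk_eq (V := V) p q
    rintro (h | ⟨h, h'⟩ | ⟨h, h'⟩)
    · exact h.identify
    · exact h.identify.trans (hpq ▸ h'.identify)
    · exact h.identify.trans (hpq ▸ h'.identify)

theorem connOn_iff_connOn_identify_and_reach :
    X.ConnOn S ↔ (X.identify p q).ConnOn S ∧ X.Reach S p q := by
  refine ⟨fun h => ⟨by rintro ⟨x⟩ ⟨y⟩; exact Reach.identify (h x y), h p q⟩, fun ⟨h, hpq⟩ x y => ?_⟩
  rcases reach_identify_mk_iff.1 (h (Quot.mk _ x) (Quot.mk _ y)) with hxy | ⟨hx, hy⟩ | ⟨hx, hy⟩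
  exacts [hxy, hx.trans (hpq.trans hy), hx.trans (hpq.symm.trans hy)]

theorem exists_mem_reach_identify_erase [DecidableEq E] (hpq : p ≠ q) {T : Finset E}
    (h : X.Reach ↑T p q) :
    ∃ e ∈ T, (X.identify p q).Reach ↑(T.erase e) (Quot.mk _ (X.fst e)) (Quot.mk _ (X.snd e)) := by
  induction T using Finset.induction_on with
  | empty =>
    rcases h.cases_head with hpq' | ⟨_, ⟨_, he, _⟩, _⟩
    exacts [absurd hpq' hpq, absurd he (Finset.notMem_empty _)]
  | insert e T he ih =>
    -- contract `e`: a walk through `e` leaves a walk in `T` from `p` to one end of `e`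
    -- and from the other end to `q`
    have hT : (X.identify (X.fst e) (X.snd e)).Reach ↑T (Quot.mk _ p) (Quot.mk _ q) :=
      h.map _ fun f hf => by
        rcases Finset.mem_insert.1 hf with rfl | hf
        exacts [identify_mk_eq (X.fst f) (X.snd f) ▸ .refl,
          (X.identify (X.fst e) (X.snd e)).reach_of_mem hf]
    rcases reach_identify_mk_iff.1 hT with hpq' | ⟨hp, hq⟩ | ⟨hp, hq⟩
    · obtain ⟨f, hf, hr⟩ := ih hpq'
      refine ⟨f, Finset.mem_insert_of_mem hf, hr.mono ?_⟩
      exact Finset.coe_subset.2 (Finset.erase_subset_erase _ (Finset.subset_insert _ _))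
    all_goals refine ⟨e, Finset.mem_insert_self e T, ?_⟩
    all_goals rw [Finset.erase_insert he]
    exacts [reach_identify_mk_iff.2 (.inr (.inl ⟨hp.symm, hq.symm⟩)),
      reach_identify_mk_iff.2 (.inr (.inr ⟨hq, hp⟩))]

theorem not_isSpanningTree_identify [DecidableEq E] (hpq : p ≠ q) {T : Finset E}
    (h : X.Reach ↑T p q) : ¬ (X.identify p q).IsSpanningTree T := fun hT =>
  have ⟨e, he, hr⟩ := exists_mem_reach_identify_erase hpq h
  ((isSpanningTree_iff _ T).1 hT).2 e he hr

def relabel (X : Multigraph V E) (σ : F → E) : Multigraph V F :=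
  ⟨X.fst ∘ σ, X.snd ∘ σ⟩

theorem adj_relabel (σ : F → E) (S : Set F) : (X.relabel σ).Adj S = X.Adj (σ '' S) := by
  ext u v
  simp [Adj, relabel]

theorem reach_relabel (σ : F → E) (S : Set F) : (X.relabel σ).Reach S = X.Reach (σ '' S) := by
  rw [Reach, adj_relabel]

theorem isSpanningTree_relabel [DecidableEq E] [DecidableEq F] {σ : F → E}
    (hσ : Function.Injective σ) (T : Finset F) :
    (X.relabel σ).IsSpanningTree T ↔ X.IsSpanningTree (T.map ⟨σ, hσ⟩) := by
  simp only [IsSpanningTree, ConnOn, adj_relabel, Finset.forall_mem_map, ← Finset.map_erase,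
    Finset.coe_map]
  rfl

end Reach

theorem reach_relabel_swap {V E E' : Type} (X : Multigraph V (E ⊕ E')) (S : Set (E ⊕ E')) :
    (X.relabel Sum.swap).Reach (Sum.swap ⁻¹' S) = X.Reach S := by
  rw [reach_relabel, Set.image_preimage_eq _ Sum.swap_rightInverse.surjective]

/-- `G` is the disjoint union of `H` and `H'` (embedded by `φ` and `φ'`) with `v1` glued to
`u1` and `v2` glued to `u2`. -/
structure IsTwoVertexJoin {V V' W E E' : Type} (H : Multigraph V E) (H' : Multigraph V' E')
    (G : Multigraph W (E ⊕ E')) (φ : V → W) (φ' : V' → W) (v1 v2 : V) (u1 u2 : V') : Prop where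
  injective_left : Function.Injective φ
  injective_right : Function.Injective φ'
  glue_one : φ v1 = φ' u1
  glue_two : φ v2 = φ' u2
  edge_left : ∀ e : E, G.fst (Sum.inl e) = φ (H.fst e) ∧ G.snd (Sum.inl e) = φ (H.snd e)
  edge_right : ∀ e' : E', G.fst (Sum.inr e') = φ' (H'.fst e') ∧
    G.snd (Sum.inr e') = φ' (H'.snd e')
  range_union : Set.range φ ∪ Set.range φ' = Set.univ
  range_inter : Set.range φ ∩ Set.range φ' = {φ v1, φ v2}

namespace IsTwoVertexJoin

variable {V V' W U E E' F : Type} {H : Multigraph V E} {H' : Multigraph V' E'}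
  {G : Multigraph W (E ⊕ E')} {φ : V → W} {φ' : V' → W} {v1 v2 : V} {u1 u2 : V'}
  {S : Set (E ⊕ E')} {x y : V}

theorem swap (h : IsTwoVertexJoin H H' G φ φ' v1 v2 u1 u2) :
    IsTwoVertexJoin H' H (G.relabel Sum.swap) φ' φ u1 u2 v1 v2 where
  injective_left := h.injective_right
  injective_right := h.injective_left
  glue_one := h.glue_one.symm
  glue_two := h.glue_two.symm
  edge_left := h.edge_right
  edge_right := h.edge_left
  range_union := by rw [Set.union_comm, h.range_union]
  range_inter := by rw [Set.inter_comm, h.range_inter, h.glue_one, h.glue_two]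

theorem eq_glued_of_apply_eq (h : IsTwoVertexJoin H H' G φ φ' v1 v2 u1 u2) {x' : V'}
    (hx : φ x = φ' x') : (x = v1 ∧ x' = u1) ∨ (x = v2 ∧ x' = u2) := by
  have hmem : φ x ∈ Set.range φ ∩ Set.range φ' := ⟨⟨x, rfl⟩, ⟨x', hx.symm⟩⟩
  rw [h.range_inter] at hmem
  rcases hmem with hv | hv
  · exact .inl ⟨h.injective_left hv, h.injective_right (hx.symm.trans (hv.trans h.glue_one))⟩
  · exact .inr ⟨h.injective_left hv, h.injective_right (hx.symm.trans (hv.trans h.glue_two))⟩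

/-- The vertex set of `G` is the pushout of those of `H` and `H'` along the glued pairs. -/
theorem exists_comp_eq (h : IsTwoVertexJoin H H' G φ φ' v1 v2 u1 u2) (f : V → U) (f' : V' → U)
    (h1 : f v1 = f' u1) (h2 : f v2 = f' u2) :
    ∃ ψ : W → U, (∀ x, ψ (φ x) = f x) ∧ ∀ x', ψ (φ' x') = f' x' := by
  refine ⟨Function.extend φ f (Function.extend φ' f' fun _ => f v1),
    h.injective_left.extend_apply _ _, fun x' => ?_⟩
  by_cases hx' : ∃ x, φ x = φ' x'
  · obtain ⟨x, hx⟩ := hx'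
    rw [← hx, h.injective_left.extend_apply]
    rcases h.eq_glued_of_apply_eq hx with ⟨rfl, rfl⟩ | ⟨rfl, rfl⟩
    exacts [h1, h2]
  · rw [Function.extend_apply' _ _ _ hx', h.injective_right.extend_apply]

theorem reach_map (h : IsTwoVertexJoin H H' G φ φ' v1 v2 u1 u2) {Y : Multigraph U F}
    {T : Set F} (f : V → U) (f' : V' → U) (h1 : f v1 = f' u1) (h2 : f v2 = f' u2)
    (hf : ∀ e ∈ Sum.inl ⁻¹' S, Y.Reach T (f (H.fst e)) (f (H.snd e)))
    (hf' : ∀ e ∈ Sum.inr ⁻¹' S, Y.Reach T (f' (H'.fst e)) (f' (H'.snd e)))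
    (hxy : G.Reach S (φ x) (φ y)) : Y.Reach T (f x) (f y) := by
  obtain ⟨ψ, hψ, hψ'⟩ := h.exists_comp_eq f f' h1 h2
  have := hxy.map ψ <| by
    rintro (e | e) he
    · rw [(h.edge_left e).1, (h.edge_left e).2, hψ, hψ]
      exact hf e he
    · rw [(h.edge_right e).1, (h.edge_right e).2, hψ', hψ']
      exact hf' e he
  rwa [hψ, hψ] at this

theorem reach_left_of_reach (h : IsTwoVertexJoin H H' G φ φ' v1 v2 u1 u2)
    (hxy : H.Reach (Sum.inl ⁻¹' S) x y) : G.Reach S (φ x) (φ y) :=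
  hxy.map φ fun e he => .single ⟨.inl e, he, .inl (h.edge_left e)⟩

theorem reach_right_of_reach (h : IsTwoVertexJoin H H' G φ φ' v1 v2 u1 u2) {x y : V'}
    (hxy : H'.Reach (Sum.inr ⁻¹' S) x y) : G.Reach S (φ' x) (φ' y) :=
  hxy.map φ' fun e he => .single ⟨.inr e, he, .inl (h.edge_right e)⟩

theorem reach_identify_of_reach (h : IsTwoVertexJoin H H' G φ φ' v1 v2 u1 u2)
    (hxy : G.Reach S (φ x) (φ y)) :
    (H.identify v1 v2).Reach (Sum.inl ⁻¹' S) (Quot.mk _ x) (Quot.mk _ y) :=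
  h.reach_map _ (fun _ => Quot.mk _ v1) rfl (identify_mk_eq v1 v2).symm
    (fun _ he => (H.identify v1 v2).reach_of_mem he) (fun _ _ => .refl) hxy

theorem reach_of_not_reach (h : IsTwoVertexJoin H H' G φ φ' v1 v2 u1 u2)
    (hu : ¬ H'.Reach (Sum.inr ⁻¹' S) u1 u2) (hxy : G.Reach S (φ x) (φ y)) :
    H.Reach (Sum.inl ⁻¹' S) x y := by
  classical
  -- send the component of `u1` in `H'` to `v1` and everything else to `v2`; no edge of `H'`
  -- joins the two parts
  refine h.reach_map id (fun x' => if H'.Reach (Sum.inr ⁻¹' S) u1 x' then v1 else v2)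
    (if_pos .refl).symm (if_neg hu).symm (fun _ he => H.reach_of_mem he) (fun e he => ?_) hxy
  have hadj := H'.reach_of_mem he
  by_cases hfst : H'.Reach (Sum.inr ⁻¹' S) u1 (H'.fst e)
  · rw [if_pos hfst, if_pos (hfst.trans hadj)]
  · rw [if_neg hfst, if_neg fun hsnd => hfst (hsnd.trans hadj.symm)]

theorem reach_left_iff (h : IsTwoVertexJoin H H' G φ φ' v1 v2 u1 u2) :
    G.Reach S (φ x) (φ y) ↔ H.Reach (Sum.inl ⁻¹' S) x y ∨
      (H'.Reach (Sum.inr ⁻¹' S) u1 u2 ∧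
        (H.identify v1 v2).Reach (Sum.inl ⁻¹' S) (Quot.mk _ x) (Quot.mk _ y)) := by
  constructor
  · intro hxy
    by_cases hu : H'.Reach (Sum.inr ⁻¹' S) u1 u2
    exacts [.inr ⟨hu, h.reach_identify_of_reach hxy⟩, .inl (h.reach_of_not_reach hu hxy)]
  · rintro (hxy | ⟨hu, hxy⟩)
    · exact h.reach_left_of_reach hxy
    have hub : G.Reach S (φ v1) (φ v2) := by
      rw [h.glue_one, h.glue_two]
      exact h.reach_right_of_reach hu
    rcases reach_identify_mk_iff.1 hxy with hxy | ⟨hx, hy⟩ | ⟨hx, hy⟩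
    · exact h.reach_left_of_reach hxy
    · exact (h.reach_left_of_reach hx).trans (hub.trans (h.reach_left_of_reach hy))
    · exact (h.reach_left_of_reach hx).trans (hub.symm.trans (h.reach_left_of_reach hy))

theorem reach_right_iff (h : IsTwoVertexJoin H H' G φ φ' v1 v2 u1 u2) {x y : V'} :
    G.Reach S (φ' x) (φ' y) ↔ H'.Reach (Sum.inr ⁻¹' S) x y ∨
      (H.Reach (Sum.inl ⁻¹' S) v1 v2 ∧
        (H'.identify u1 u2).Reach (Sum.inr ⁻¹' S) (Quot.mk _ x) (Quot.mk _ y)) := by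
  rw [← reach_relabel_swap G S]
  exact h.swap.reach_left_iff

theorem reach_apply_of_connOn_identify (h : IsTwoVertexJoin H H' G φ φ' v1 v2 u1 u2)
    (hc : (H.identify v1 v2).ConnOn (Sum.inl ⁻¹' S)) (hub : G.Reach S (φ v1) (φ v2)) (x : V) :
    G.Reach S (φ x) (φ v1) := by
  rcases reach_identify_mk_iff.1 (hc (Quot.mk _ x) (Quot.mk _ v1)) with hx | ⟨hx, -⟩ | ⟨hx, -⟩
  exacts [h.reach_left_of_reach hx, h.reach_left_of_reach hx,
    (h.reach_left_of_reach hx).trans hub.symm]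

theorem connOn_iff (h : IsTwoVertexJoin H H' G φ φ' v1 v2 u1 u2) :
    G.ConnOn S ↔ (H.identify v1 v2).ConnOn (Sum.inl ⁻¹' S) ∧
      (H'.identify u1 u2).ConnOn (Sum.inr ⁻¹' S) ∧
      (H.Reach (Sum.inl ⁻¹' S) v1 v2 ∨ H'.Reach (Sum.inr ⁻¹' S) u1 u2) := by
  constructor
  · intro hG
    refine ⟨?_, ?_, ?_⟩
    · rintro ⟨x⟩ ⟨y⟩
      exact h.reach_identify_of_reach (hG _ _)
    · rintro ⟨x⟩ ⟨y⟩
      exact h.swap.reach_identify_of_reach (S := Sum.swap ⁻¹' S)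
        (by rw [reach_relabel_swap]; exact hG _ _)
    · rcases h.reach_left_iff.1 (hG (φ v1) (φ v2)) with hv | ⟨hu, -⟩
      exacts [.inl hv, .inr hu]
  · rintro ⟨hc, hc', hvu⟩
    have hub : G.Reach S (φ v1) (φ v2) := by
      rcases hvu with hv | hu
      · exact h.reach_left_of_reach hv
      · rw [h.glue_one, h.glue_two]
        exact h.reach_right_of_reach hu
    have hub' : (G.relabel Sum.swap).Reach (Sum.swap ⁻¹' S) (φ' u1) (φ' u2) := by
      rwa [reach_relabel_swap, ← h.glue_one, ← h.glue_two]
    have hw : ∀ w, G.Reach S w (φ v1) := by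
      intro w
      have hw : w ∈ Set.range φ ∪ Set.range φ' := h.range_union ▸ Set.mem_univ w
      rcases hw with ⟨x, rfl⟩ | ⟨x', rfl⟩
      · exact h.reach_apply_of_connOn_identify hc hub x
      · rw [h.glue_one, ← reach_relabel_swap]
        exact h.swap.reach_apply_of_connOn_identify (S := Sum.swap ⁻¹' S) hc' hub' x'
    exact fun w w' => (hw w).trans (hw w').symm

section SpanningTree

variable {A : Finset E} {B : Finset E'}

theorem connOn_disjSum_iff (h : IsTwoVertexJoin H H' G φ φ' v1 v2 u1 u2) :
    G.ConnOn ↑(A.disjSum B) ↔ (H.identify v1 v2).ConnOn ↑A ∧ (H'.identify u1 u2).ConnOn ↑B ∧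
      (H.Reach ↑A v1 v2 ∨ H'.Reach ↑B u1 u2) := by
  rw [h.connOn_iff]
  congr! <;> ext <;> simp

variable [DecidableEq E] [DecidableEq E']

theorem reach_erase_inl_iff (h : IsTwoVertexJoin H H' G φ φ' v1 v2 u1 u2) (a : E) :
    G.Reach ↑((A.disjSum B).erase (.inl a)) (G.fst (.inl a)) (G.snd (.inl a)) ↔
      H.Reach ↑(A.erase a) (H.fst a) (H.snd a) ∨ (H'.Reach ↑B u1 u2 ∧
        (H.identify v1 v2).Reach ↑(A.erase a) ((H.identify v1 v2).fst a)
          ((H.identify v1 v2).snd a)) := by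
  rw [(h.edge_left a).1, (h.edge_left a).2, h.reach_left_iff]
  congr! <;> ext <;> simp

theorem reach_erase_inr_iff (h : IsTwoVertexJoin H H' G φ φ' v1 v2 u1 u2) (b : E') :
    G.Reach ↑((A.disjSum B).erase (.inr b)) (G.fst (.inr b)) (G.snd (.inr b)) ↔
      H'.Reach ↑(B.erase b) (H'.fst b) (H'.snd b) ∨ (H.Reach ↑A v1 v2 ∧
        (H'.identify u1 u2).Reach ↑(B.erase b) ((H'.identify u1 u2).fst b)
          ((H'.identify u1 u2).snd b)) := by
  rw [(h.edge_right b).1, (h.edge_right b).2, h.reach_right_iff]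
  congr! <;> ext <;> simp

theorem isSpanningTree_disjSum_iff_of_reach_right (h : IsTwoVertexJoin H H' G φ φ' v1 v2 u1 u2)
    (hv : v1 ≠ v2) (hu : H'.Reach ↑B u1 u2) :
    G.IsSpanningTree (A.disjSum B) ↔
      (H.identify v1 v2).IsSpanningTree A ∧ H'.IsSpanningTree B := by
  simp only [isSpanningTree_iff, h.connOn_disjSum_iff,
    connOn_iff_connOn_identify_and_reach (p := u1) (q := u2),
    Sum.forall, Finset.inl_mem_disjSum, Finset.inr_mem_disjSum]
  constructor
  · rintro ⟨⟨hc, hc', -⟩, hA, hB⟩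
    exact ⟨⟨hc, fun a ha hr => hA a ha ((h.reach_erase_inl_iff a).2 (.inr ⟨hu, hr⟩))⟩,
      ⟨⟨hc', hu⟩, fun b hb hr => hB b hb ((h.reach_erase_inr_iff b).2 (.inl hr))⟩⟩
  · rintro ⟨⟨hc, hA⟩, ⟨hc', -⟩, hB⟩
    have hv' : ¬ H.Reach ↑A v1 v2 := fun hr =>
      not_isSpanningTree_identify hv hr ((isSpanningTree_iff _ _).2 ⟨hc, hA⟩)
    refine ⟨⟨hc, hc', .inr hu⟩, fun a ha hr => ?_, fun b hb hr => ?_⟩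
    · rcases (h.reach_erase_inl_iff a).1 hr with hr | ⟨-, hr⟩
      exacts [hA a ha (Reach.identify hr), hA a ha hr]
    · rcases (h.reach_erase_inr_iff b).1 hr with hr | ⟨hr, -⟩
      exacts [hB b hb hr, hv' hr]

theorem isSpanningTree_disjSum_iff_of_reach_left (h : IsTwoVertexJoin H H' G φ φ' v1 v2 u1 u2)
    (hu : u1 ≠ u2) (hv : H.Reach ↑A v1 v2) :
    G.IsSpanningTree (A.disjSum B) ↔
      H.IsSpanningTree A ∧ (H'.identify u1 u2).IsSpanningTree B := by
  have hswap : (B.disjSum A).map ⟨Sum.swap, Sum.swap_leftInverse.injective⟩ = A.disjSum B := by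
    ext (a | b) <;> simp
  rw [and_comm, ← h.swap.isSpanningTree_disjSum_iff_of_reach_right hu hv,
    isSpanningTree_relabel Sum.swap_leftInverse.injective, hswap]

theorem isSpanningTree_disjSum_iff (h : IsTwoVertexJoin H H' G φ φ' v1 v2 u1 u2)
    (hv : v1 ≠ v2) (hu : u1 ≠ u2) :
    G.IsSpanningTree (A.disjSum B) ↔
      (H.identify v1 v2).IsSpanningTree A ∧ H'.IsSpanningTree B ∨
        H.IsSpanningTree A ∧ (H'.identify u1 u2).IsSpanningTree B := by
  constructor
  · intro hT
    rcases (h.connOn_disjSum_iff.1 hT.1).2.2 with hr | hr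
    exacts [.inr ((h.isSpanningTree_disjSum_iff_of_reach_left hu hr).1 hT),
      .inl ((h.isSpanningTree_disjSum_iff_of_reach_right hv hr).1 hT)]
  · rintro (hT | hT)
    exacts [(h.isSpanningTree_disjSum_iff_of_reach_right hv (hT.2.1 u1 u2)).2 hT,
      (h.isSpanningTree_disjSum_iff_of_reach_left hu (hT.1.1 v1 v2)).2 hT]

end SpanningTree

end IsTwoVertexJoin

section Kirchhoff

open MvPolynomial

variable {V V₁ V₂ V₁' V₂' W E E' F : Type}

open Classical in
theorem rename_kirchhoff [Fintype E] [DecidableEq E] (X : Multigraph V E) (f : E → F) :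
    rename f X.kirchhoff =
      ∑ T : Finset E, if X.IsSpanningTree T then ∏ e ∈ Tᶜ, MvPolynomial.X (f e) else 0 := by
  simp only [kirchhoff, map_sum, apply_ite (rename f), map_prod, rename_X, map_zero]

theorem kirchhoff_eq_of_isSpanningTree_disjSum_iff [Fintype E] [DecidableEq E] [Fintype E']
    [DecidableEq E'] {G : Multigraph W (E ⊕ E')} {H₁ : Multigraph V₁ E} {H₂ : Multigraph V₂ E}
    {K₁ : Multigraph V₁' E'} {K₂ : Multigraph V₂' E'}
    (hG : ∀ A B, G.IsSpanningTree (A.disjSum B) ↔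
      H₁.IsSpanningTree A ∧ K₁.IsSpanningTree B ∨ H₂.IsSpanningTree A ∧ K₂.IsSpanningTree B)
    (hH : ∀ A, ¬ (H₁.IsSpanningTree A ∧ H₂.IsSpanningTree A)) :
    G.kirchhoff =
      rename Sum.inl H₁.kirchhoff * rename Sum.inr K₁.kirchhoff +
        rename Sum.inl H₂.kirchhoff * rename Sum.inr K₂.kirchhoff := by
  classical
  rw [kirchhoff, ← Finset.sumEquiv.symm.toEquiv.sum_comp, Fintype.sum_prod_type]
  simp only [rename_kirchhoff, Finset.sum_mul_sum, ← Finset.sum_add_distrib]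
  refine Finset.sum_congr rfl fun A _ => Finset.sum_congr rfl fun B _ => ?_
  simp only [OrderIso.toEquiv_symm, OrderIso.coe_symm_toEquiv, Finset.sumEquiv_symm_apply, hG,
    Finset.compl_disjSum, Finset.prod_disjSum]
  by_cases h₁ : H₁.IsSpanningTree A <;> by_cases h₂ : H₂.IsSpanningTree A
  · exact absurd ⟨h₁, h₂⟩ (hH A)
  all_goals simp [h₁, h₂, mul_ite]

end Kirchhoff

end Multigraph

open Multigraph MvPolynomial in
/-- Two-vertex join formula: if `G` is formed from `H` and `H'` by identifying
the vertex pair `{v1, v2}` of `H` with the pair `{u1, u2}` of `H'`, then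
`Ψ_G = Ψ_{H̄}·Ψ_{H'} + Ψ_H·Ψ_{H̄'}`, where the bar denotes identifying the two
marked vertices. -/
theorem kirchhoff_two_vertex_join {V E V' E' W : Type}
    [Fintype E] [DecidableEq E] [Fintype E'] [DecidableEq E']
    (H : Multigraph V E) (H' : Multigraph V' E') (G : Multigraph W (E ⊕ E'))
    (v1 v2 : V) (u1 u2 : V') (hv : v1 ≠ v2) (hu : u1 ≠ u2)
    (φ : V → W) (φ' : V' → W)
    (hφ : Function.Injective φ) (hφ' : Function.Injective φ')
    (h1 : φ v1 = φ' u1) (h2 : φ v2 = φ' u2)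
    (hc : ∀ e : E, G.fst (Sum.inl e) = φ (H.fst e) ∧ G.snd (Sum.inl e) = φ (H.snd e))
    (hc' : ∀ e' : E', G.fst (Sum.inr e') = φ' (H'.fst e') ∧
      G.snd (Sum.inr e') = φ' (H'.snd e'))
    (hcover : Set.range φ ∪ Set.range φ' = Set.univ)
    (hmeet : Set.range φ ∩ Set.range φ' = {φ v1, φ v2}) :
    G.kirchhoff =
      rename (Sum.inl : E → E ⊕ E') (H.identify v1 v2).kirchhoff *
          rename (Sum.inr : E' → E ⊕ E') H'.kirchhoff
        + rename (Sum.inl : E → E ⊕ E') H.kirchhoff *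
          rename (Sum.inr : E' → E ⊕ E') (H'.identify u1 u2).kirchhoff := by
  have h : IsTwoVertexJoin H H' G φ φ' v1 v2 u1 u2 := ⟨hφ, hφ', h1, h2, hc, hc', hcover, hmeet⟩
  exact kirchhoff_eq_of_isSpanningTree_disjSum_iff (fun _ _ => h.isSpanningTree_disjSum_iff hv hu)
    fun A hA => not_isSpanningTree_identify hv (hA.2.1 v1 v2) hA.1
end
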